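/- For each i, the operators Eᵢ = (√q+√q⁻¹)^{−1/2} ∂ᵢᴸ eᵢ, Fᵢ = (√q+√q⁻¹)^{−1/2} xᵢᴸ eᵢ, Kᵢ = √q⁻¹ γᵢ⁻¹ satisfy the osp-type relations Kᵢ Eᵢ Kᵢ⁻¹ = q Eᵢ, Kᵢ Fᵢ Kᵢ⁻¹ = q⁻¹ Fᵢ, and EᵢFᵢ + FᵢEᵢ = (Kᵢ − Kᵢ⁻¹)/(q − q⁻¹). -/

import Mathlib

noncomputable section

/-- Multi-indices for `n` q-commuting variables. -/
abbrev QIdx (n : ℕ) := Fin n →₀ ℕ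

/-- A polynomial in the q-commutative algebra `A = ℂ⟨x₁,…,xₙ⟩/(xᵢxⱼ - q xⱼxᵢ, i<j)`,
represented by its coefficient function with respect to the ordered monomial basis
`x^α = x₁^{α₁}⋯xₙ^{αₙ}`. -/
abbrev QPoly (n : ℕ) := QIdx n → ℂ

/-- The symmetric q-number `[m]_q = (q^m - q^{-m})/(q - q⁻¹)` (as a complex scalar). -/
def qNum (q : ℝ) (m : ℤ) : ℂ := ((q : ℂ) ^ m - (q : ℂ) ^ (-m)) / ((q : ℂ) - (q : ℂ)⁻¹)

/-- `∑_{j<i} αⱼ`. -/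
def lowSum {n : ℕ} (i : Fin n) (α : QIdx n) : ℤ := ∑ j, if j < i then (α j : ℤ) else 0

/-- `∑_{j>i} αⱼ`. -/
def highSum {n : ℕ} (i : Fin n) (α : QIdx n) : ℤ := ∑ j, if i < j then (α j : ℤ) else 0

/-- `∑_j αⱼ`, the total degree. -/
def totSum {n : ℕ} (α : QIdx n) : ℤ := ∑ j, (α j : ℤ)

/-- The dilation operator `γᵢ : xᵢ ↦ q·xᵢ`; on monomials `γᵢ x^α = q^{αᵢ} x^α`. -/
def gam {n : ℕ} (q : ℝ) (i : Fin n) (f : QPoly n) : QPoly n :=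
  fun α => (q : ℂ) ^ (α i : ℤ) * f α

/-- The inverse dilation `γᵢ⁻¹`. -/
def gamInv {n : ℕ} (q : ℝ) (i : Fin n) (f : QPoly n) : QPoly n :=
  fun α => (q : ℂ) ^ (-(α i : ℤ)) * f α

/-- The total dilation `γ = γ₁⋯γₙ`. -/
def gamAll {n : ℕ} (q : ℝ) (f : QPoly n) : QPoly n :=
  fun α => (q : ℂ) ^ totSum α * f α

/-- The inverse total dilation `γ⁻¹`. -/
def gamAllInv {n : ℕ} (q : ℝ) (f : QPoly n) : QPoly n :=
  fun α => (q : ℂ) ^ (-totSum α) * f α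

/-- `ωᵢ = γ₁⁻¹⋯γ_{i-1}⁻¹ γ_{i+1}⋯γₙ`; on monomials it multiplies by
`q^{∑_{j>i} αⱼ - ∑_{j<i} αⱼ}`. -/
def omegaOp {n : ℕ} (q : ℝ) (i : Fin n) (f : QPoly n) : QPoly n :=
  fun α => (q : ℂ) ^ (highSum i α - lowSum i α) * f α

/-- `ωᵢ⁻¹ = γ₁⋯γ_{i-1} γ_{i+1}⁻¹⋯γₙ⁻¹`. -/
def omegaInvOp {n : ℕ} (q : ℝ) (i : Fin n) (f : QPoly n) : QPoly n :=
  fun α => (q : ℂ) ^ (lowSum i α - highSum i α) * f α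

/-- Left multiplication by `xᵢ`:  `xᵢ · x^β = q^{-∑_{j<i} βⱼ} x^{β+δᵢ}` in `A`. -/
def xL {n : ℕ} (q : ℝ) (i : Fin n) (f : QPoly n) : QPoly n :=
  fun α => if α i = 0 then 0 else
    (q : ℂ) ^ (-(lowSum i α)) * f (α - Finsupp.single i 1)

/-- Right multiplication by `xᵢ`:  `x^β · xᵢ = q^{-∑_{j>i} βⱼ} x^{β+δᵢ}` in `A`. -/
def xR {n : ℕ} (q : ℝ) (i : Fin n) (f : QPoly n) : QPoly n :=
  fun α => if α i = 0 then 0 else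
    (q : ℂ) ^ (-(highSum i α)) * f (α - Finsupp.single i 1)

/-- The left partial q-difference operator `∂ᵢᴸ = (xᵢᴸ)⁻¹(γᵢ - γᵢ⁻¹)/(q - q⁻¹)`;
on monomials `∂ᵢᴸ x^α = [αᵢ]_q q^{∑_{j<i} αⱼ} x^{α-δᵢ}`. -/
def dL {n : ℕ} (q : ℝ) (i : Fin n) (f : QPoly n) : QPoly n :=
  fun α => qNum q (α i + 1) * (q : ℂ) ^ lowSum i α * f (α + Finsupp.single i 1)

/-- The right partial q-difference operator `∂ᵢᴿ = (xᵢᴿ)⁻¹(γᵢ - γᵢ⁻¹)/(q - q⁻¹)`;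
on monomials `∂ᵢᴿ x^α = [αᵢ]_q q^{∑_{j>i} αⱼ} x^{α-δᵢ}`. -/
def dR {n : ℕ} (q : ℝ) (i : Fin n) (f : QPoly n) : QPoly n :=
  fun α => qNum q (α i + 1) * (q : ℂ) ^ highSum i α * f (α + Finsupp.single i 1)

/-- The q-power picked up when reordering `x^α · x^β = q^(qExp α β) x^{α+β}`,
namely `qExp α β = -∑_{i>j} αᵢ βⱼ`. -/
def qExp {n : ℕ} (α β : QIdx n) : ℤ :=
  -∑ i, ∑ j, if j < i then (α i : ℤ) * (β j : ℤ) else 0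

/-- Multiplication in the q-commutative algebra `A`, in coefficient form. -/
def qMul {n : ℕ} (q : ℝ) (f g : QPoly n) : QPoly n :=
  fun α => ∑ p ∈ Finset.HasAntidiagonal.antidiagonal α, (q : ℂ) ^ qExp p.1 p.2 * f p.1 * g p.2

/-- The unit of `A`. -/
def qOne {n : ℕ} : QPoly n := fun α => if α = 0 then 1 else 0

/-- Powers in `A`. -/
def qPow {n : ℕ} (q : ℝ) (f : QPoly n) : ℕ → QPoly n
  | 0 => qOne
  | m + 1 => qMul q f (qPow q f m)

/-- The monomial `x^α` as an element of `A`. -/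
def mono {n : ℕ} (α : QIdx n) : QPoly n := fun β => if β = α then 1 else 0

/-- The variable `xᵢ` as an element of `A`. -/
def Xvar {n : ℕ} (i : Fin n) : QPoly n := mono (Finsupp.single i 1)

/-- The Q-radius `Q = x₁² + q⁻¹ x₂² + … + q^{-n+1} xₙ²` as an element of `A`. -/
def Qradius {n : ℕ} (q : ℝ) : QPoly n :=
  ∑ i : Fin n, (q : ℂ) ^ (-((i : ℕ) : ℤ)) • qMul q (Xvar i) (Xvar i)

/-- The operator `Q̂ᴸ = ∑ᵢ q^{-i+1}(xᵢᴸ)²` of left multiplication by the Q-radius. -/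
def QhatL {n : ℕ} (q : ℝ) (f : QPoly n) : QPoly n :=
  ∑ i : Fin n, (q : ℂ) ^ (-((i : ℕ) : ℤ)) • xL q i (xL q i f)

/-- The `U_q(o)`-invariant q-Laplacian `Δ_qᴿ = ∑ᵢ q^{n-i}(∂ᵢᴿ)²`. -/
def qLap {n : ℕ} (q : ℝ) (f : QPoly n) : QPoly n :=
  ∑ i : Fin n, (q : ℂ) ^ ((n : ℤ) - 1 - ((i : ℕ) : ℤ)) • dR q i (dR q i f)


/-- `√q` as a complex scalar. -/
def sqC (q : ℝ) : ℂ := Complex.ofReal (Real.sqrt q)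

/-- The right partial q-difference operator on Clifford-algebra-valued polynomials. -/
def dRC {n : ℕ} {C : Type*} [Ring C] [Algebra ℂ C] (q : ℝ) (i : Fin n)
    (f : QIdx n → C) : QIdx n → C :=
  fun α => (qNum q (α i + 1) * (q : ℂ) ^ highSum i α) • f (α + Finsupp.single i 1)

/-- The left partial q-difference operator on Clifford-algebra-valued polynomials. -/
def dLC {n : ℕ} {C : Type*} [Ring C] [Algebra ℂ C] (q : ℝ) (i : Fin n)
    (f : QIdx n → C) : QIdx n → C :=
  fun α => (qNum q (α i + 1) * (q : ℂ) ^ lowSum i α) • f (α + Finsupp.single i 1)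

/-- Left multiplication by `xᵢ` on Clifford-algebra-valued polynomials. -/
def xLC {n : ℕ} {C : Type*} [Ring C] [Algebra ℂ C] (q : ℝ) (i : Fin n)
    (f : QIdx n → C) : QIdx n → C :=
  fun α => if α i = 0 then 0 else
    (q : ℂ) ^ (-(lowSum i α)) • f (α - Finsupp.single i 1)

/-- The dilation `γᵢ` on Clifford-algebra-valued polynomials. -/
def gamC {n : ℕ} {C : Type*} [Ring C] [Algebra ℂ C] (q : ℝ) (i : Fin n)
    (f : QIdx n → C) : QIdx n → C :=
  fun α => (q : ℂ) ^ (α i : ℤ) • f α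

/-- The inverse dilation `γᵢ⁻¹` on Clifford-algebra-valued polynomials. -/
def gamInvC {n : ℕ} {C : Type*} [Ring C] [Algebra ℂ C] (q : ℝ) (i : Fin n)
    (f : QIdx n → C) : QIdx n → C :=
  fun α => (q : ℂ) ^ (-(α i : ℤ)) • f α

/-- q-commutative multiplication of Clifford-algebra-valued polynomials (the
variables q-commute among themselves and commute with the Clifford generators). -/
def qMulC {n : ℕ} {C : Type*} [Ring C] [Algebra ℂ C] (q : ℝ)
    (f g : QIdx n → C) : QIdx n → C :=
  fun α => ∑ p ∈ Finset.HasAntidiagonal.antidiagonal α, (q : ℂ) ^ qExp p.1 p.2 • (f p.1 * g p.2)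

/-- The variable `xᵢ` as a Clifford-algebra-valued polynomial. -/
def XvarC {n : ℕ} (C : Type*) [Ring C] [Algebra ℂ C] (i : Fin n) : QIdx n → C :=
  fun α => if α = Finsupp.single i 1 then 1 else 0

/-- `Eᵢ = (√q + √q⁻¹)^{-1/2} ∂ᵢᴸ eᵢ`. -/
def Eosp {n : ℕ} {C : Type*} [Ring C] [Algebra ℂ C] (q : ℝ) (e : Fin n → C) (i : Fin n)
    (f : QIdx n → C) : QIdx n → C :=
  (Complex.ofReal (Real.sqrt (Real.sqrt q + (Real.sqrt q)⁻¹)))⁻¹ •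
    dLC q i (fun α => f α * e i)

/-- `Fᵢ = (√q + √q⁻¹)^{-1/2} xᵢᴸ eᵢ`. -/
def Fosp {n : ℕ} {C : Type*} [Ring C] [Algebra ℂ C] (q : ℝ) (e : Fin n → C) (i : Fin n)
    (f : QIdx n → C) : QIdx n → C :=
  (Complex.ofReal (Real.sqrt (Real.sqrt q + (Real.sqrt q)⁻¹)))⁻¹ •
    xLC q i (fun α => f α * e i)

/-- `Kᵢ = √q⁻¹ γᵢ⁻¹`. -/
def Kosp {n : ℕ} {C : Type*} [Ring C] [Algebra ℂ C] (q : ℝ) (i : Fin n)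
    (f : QIdx n → C) : QIdx n → C :=
  (sqC q)⁻¹ • gamInvC q i f

/-- `Kᵢ⁻¹ = √q γᵢ`. -/
def KospInv {n : ℕ} {C : Type*} [Ring C] [Algebra ℂ C] (q : ℝ) (i : Fin n)
    (f : QIdx n → C) : QIdx n → C :=
  sqC q • gamC q i f

/-!
On the monomial basis `Kᵢ` is diagonal, `Kᵢ x^α = √q⁻¹ q^{-αᵢ} x^α`, while `Eᵢ` and `Fᵢ` shift
`αᵢ` by `∓1`; so conjugation by `Kᵢ` multiplies them by `q^{±1}`. In `EᵢFᵢ` and `FᵢEᵢ` the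
q-powers `q^{±∑_{j<i} αⱼ}` produced by `∂ᵢᴸ` and `xᵢᴸ` cancel and `eᵢ² = -1`, so
`EᵢFᵢ + FᵢEᵢ` acts on `x^α` by `-([αᵢ+1]_q + [αᵢ]_q)/(√q + √q⁻¹)`, and
`[m+1]_q + [m]_q = (√q + √q⁻¹)(q^{m+1/2} - q^{-m-1/2})/(q - q⁻¹)`.
-/

def ospScale (q : ℝ) : ℂ := Complex.ofReal (Real.sqrt (Real.sqrt q + (Real.sqrt q)⁻¹))

lemma ospScale_sq (q : ℝ) : ospScale q ^ 2 = sqC q + (sqC q)⁻¹ := by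
  rw [ospScale, ← Complex.ofReal_pow, Real.sq_sqrt (by positivity), sqC,
    Complex.ofReal_add, Complex.ofReal_inv]

section

variable {q : ℝ}

lemma sqC_ne_zero (hq : 0 < q) : sqC q ≠ 0 :=
  Complex.ofReal_ne_zero.mpr (Real.sqrt_pos.mpr hq).ne'

lemma sqC_sq (hq : 0 < q) : sqC q ^ 2 = q := by
  rw [sqC, ← Complex.ofReal_pow, Real.sq_sqrt hq.le]

lemma qNum_zero (q : ℝ) : qNum q 0 = 0 := by
  simp [qNum]

lemma qNum_add_one_add_qNum (hq : 0 < q) (m : ℤ) :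
    qNum q (m + 1) + qNum q m
      = (sqC q + (sqC q)⁻¹) * (sqC q * (q : ℂ) ^ m - (sqC q)⁻¹ * (q : ℂ) ^ (-m))
        / ((q : ℂ) - (q : ℂ)⁻¹) := by
  have hs := sqC_ne_zero hq
  have hq0 : (q : ℂ) ≠ 0 := Complex.ofReal_ne_zero.mpr hq.ne'
  have hqm : (q : ℂ) ^ m ≠ 0 := zpow_ne_zero m hq0
  simp only [qNum, neg_add, zpow_add₀ hq0, zpow_neg, zpow_one]
  rw [← add_div]
  generalize (q : ℂ) ^ m = t at hqm ⊢
  rw [← sqC_sq hq]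
  field_simp
  ring

lemma ospScale_inv_sq_mul_qNum_add (hq : 0 < q) (m : ℤ) :
    (ospScale q)⁻¹ ^ 2 * (qNum q (m + 1) + qNum q m)
      = (sqC q * (q : ℂ) ^ m - (sqC q)⁻¹ * (q : ℂ) ^ (-m)) / ((q : ℂ) - (q : ℂ)⁻¹) := by
  have hs : 0 < Real.sqrt q := Real.sqrt_pos.mpr hq
  have hsum : sqC q + (sqC q)⁻¹ ≠ 0 := by
    rw [sqC, ← Complex.ofReal_inv, ← Complex.ofReal_add, Complex.ofReal_ne_zero]
    positivity
  rw [inv_pow, ospScale_sq, qNum_add_one_add_qNum hq, mul_div_assoc, inv_mul_cancel_left₀ hsum]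

end

section

variable {n : ℕ} (i : Fin n)

lemma lowSum_add_single (α : QIdx n) : lowSum i (α + Finsupp.single i 1) = lowSum i α := by
  refine Finset.sum_congr rfl fun j _ => ?_
  split_ifs with h
  · simp [h.ne']
  · rfl

lemma exists_eq_add_single_of_ne_zero {α : QIdx n} (h : α i ≠ 0) :
    ∃ β : QIdx n, α = β + Finsupp.single i 1 :=
  ⟨α - Finsupp.single i 1,
    (tsub_add_cancel_of_le (Finsupp.single_le_iff.mpr (Nat.one_le_iff_ne_zero.mpr h))).symm⟩

end

section

variable {n : ℕ} {C : Type*} [Ring C] [Algebra ℂ C] {q : ℝ} (e : Fin n → C) (i : Fin n)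

lemma Eosp_apply (f : QIdx n → C) (α : QIdx n) :
    Eosp q e i f α = ((ospScale q)⁻¹ * (qNum q (α i + 1) * (q : ℂ) ^ lowSum i α)) •
      (f (α + Finsupp.single i 1) * e i) := by
  simp only [Eosp, dLC, Pi.smul_apply, smul_smul, ospScale]

lemma Fosp_apply_add_single (f : QIdx n → C) (β : QIdx n) :
    Fosp q e i f (β + Finsupp.single i 1) = ((ospScale q)⁻¹ * (q : ℂ) ^ (-lowSum i β)) •
      (f β * e i) := by
  simp [Fosp, xLC, smul_smul, lowSum_add_single, ospScale]

lemma Fosp_apply_of_eq_zero (f : QIdx n → C) {α : QIdx n} (h : α i = 0) :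
    Fosp q e i f α = 0 := by
  simp [Fosp, xLC, h]

lemma Kosp_apply (f : QIdx n → C) (α : QIdx n) :
    Kosp q i f α = ((sqC q)⁻¹ * (q : ℂ) ^ (-(α i : ℤ))) • f α := by
  simp only [Kosp, gamInvC, Pi.smul_apply, smul_smul]

lemma KospInv_apply (f : QIdx n → C) (α : QIdx n) :
    KospInv q i f α = (sqC q * (q : ℂ) ^ (α i : ℤ)) • f α := by
  simp only [KospInv, gamC, Pi.smul_apply, smul_smul]

lemma Kosp_Eosp_KospInv (hq : 0 < q) (f : QIdx n → C) :
    Kosp q i (Eosp q e i (KospInv q i f)) = (q : ℂ) • Eosp q e i f := by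
  funext α
  have hs := sqC_ne_zero hq
  have hq0 : (q : ℂ) ≠ 0 := Complex.ofReal_ne_zero.mpr hq.ne'
  have hqa : (q : ℂ) ^ (α i : ℤ) ≠ 0 := zpow_ne_zero _ hq0
  simp only [Pi.smul_apply, Kosp_apply, Eosp_apply, KospInv_apply, smul_mul_assoc, smul_smul,
    Finsupp.add_apply, Finsupp.single_eq_same, Nat.cast_add, Nat.cast_one,
    zpow_add_one₀ hq0, zpow_neg]
  congr 1
  field_simp

lemma Kosp_Fosp_KospInv (hq : 0 < q) (f : QIdx n → C) :
    Kosp q i (Fosp q e i (KospInv q i f)) = (q : ℂ)⁻¹ • Fosp q e i f := by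
  funext α
  by_cases h : α i = 0
  · simp [Kosp_apply, Fosp_apply_of_eq_zero e i _ h]
  obtain ⟨β, rfl⟩ := exists_eq_add_single_of_ne_zero i h
  have hs := sqC_ne_zero hq
  have hq0 : (q : ℂ) ≠ 0 := Complex.ofReal_ne_zero.mpr hq.ne'
  have hqb : (q : ℂ) ^ (β i : ℤ) ≠ 0 := zpow_ne_zero _ hq0
  simp only [Pi.smul_apply, Kosp_apply, Fosp_apply_add_single, KospInv_apply, smul_mul_assoc,
    smul_smul, Finsupp.add_apply, Finsupp.single_eq_same, Nat.cast_add, Nat.cast_one,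
    zpow_add_one₀ hq0, zpow_neg]
  congr 1
  field_simp

lemma Eosp_Fosp_apply (hq : q ≠ 0) (he : e i ^ 2 = -1) (f : QIdx n → C) (α : QIdx n) :
    Eosp q e i (Fosp q e i f) α = -((ospScale q)⁻¹ ^ 2 * qNum q (α i + 1)) • f α := by
  have hq0 : (q : ℂ) ≠ 0 := Complex.ofReal_ne_zero.mpr hq
  have hql : (q : ℂ) ^ lowSum i α ≠ 0 := zpow_ne_zero _ hq0
  rw [Eosp_apply, Fosp_apply_add_single, smul_mul_assoc, mul_assoc, ← sq, he, mul_neg_one,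
    smul_neg, smul_neg, smul_smul, neg_smul]
  congr 2
  rw [zpow_neg]
  field_simp

lemma Fosp_Eosp_apply (hq : q ≠ 0) (he : e i ^ 2 = -1) (f : QIdx n → C) (α : QIdx n) :
    Fosp q e i (Eosp q e i f) α = -((ospScale q)⁻¹ ^ 2 * qNum q (α i)) • f α := by
  by_cases h : α i = 0
  · simp [Fosp_apply_of_eq_zero e i _ h, h, qNum_zero]
  obtain ⟨β, rfl⟩ := exists_eq_add_single_of_ne_zero i h
  have hq0 : (q : ℂ) ≠ 0 := Complex.ofReal_ne_zero.mpr hq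
  have hql : (q : ℂ) ^ lowSum i β ≠ 0 := zpow_ne_zero _ hq0
  rw [Fosp_apply_add_single, Eosp_apply, smul_mul_assoc, mul_assoc, ← sq, he, mul_neg_one,
    smul_neg, smul_neg, smul_smul, neg_smul]
  simp only [Finsupp.add_apply, Finsupp.single_eq_same, Nat.cast_add, Nat.cast_one]
  congr 2
  rw [zpow_neg]
  field_simp

lemma Eosp_Fosp_add_Fosp_Eosp (hq : 0 < q) (he : e i ^ 2 = -1) (f : QIdx n → C) :
    Eosp q e i (Fosp q e i f) + Fosp q e i (Eosp q e i f)
      = ((q : ℂ) - (q : ℂ)⁻¹)⁻¹ • (Kosp q i f - KospInv q i f) := by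
  funext α
  rw [Pi.add_apply, Eosp_Fosp_apply e i hq.ne' he, Fosp_Eosp_apply e i hq.ne' he, Pi.smul_apply,
    Pi.sub_apply, Kosp_apply, KospInv_apply, ← add_smul, ← sub_smul, smul_smul]
  congr 1
  rw [← neg_add, ← mul_add, ospScale_inv_sq_mul_qNum_add hq]
  ring

end

theorem osp_relations_general (n : ℕ) (q : ℝ) (hq : 0 < q)
    (C : Type*) [Ring C] [Algebra ℂ C] (e : Fin n → C)
    (he1 : ∀ j, e j ^ 2 = -1) (i : Fin n) :
    (∀ f : QIdx n → C, Kosp q i (Eosp q e i (KospInv q i f)) = (q : ℂ) • Eosp q e i f) ∧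
    (∀ f : QIdx n → C, Kosp q i (Fosp q e i (KospInv q i f)) = (q : ℂ)⁻¹ • Fosp q e i f) ∧
    (∀ f : QIdx n → C,
      Eosp q e i (Fosp q e i f) + Fosp q e i (Eosp q e i f)
        = ((q : ℂ) - (q : ℂ)⁻¹)⁻¹ • (Kosp q i f - KospInv q i f)) :=
  ⟨Kosp_Eosp_KospInv e i hq, Kosp_Fosp_KospInv e i hq, Eosp_Fosp_add_Fosp_Eosp e i hq (he1 i)⟩

/-- the operators `Eᵢ, Fᵢ, Kᵢ` satisfy the osp-type relations
`KᵢEᵢKᵢ⁻¹ = qEᵢ`, `KᵢFᵢKᵢ⁻¹ = q⁻¹Fᵢ`, `EᵢFᵢ + FᵢEᵢ = (Kᵢ − Kᵢ⁻¹)/(q − q⁻¹)`. -/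
theorem osp_relations (n : ℕ) (q : ℝ) (hq : 0 < q) (hq1 : q ≠ 1)
    (C : Type*) [Ring C] [Algebra ℂ C] (e : Fin n → C)
    (he1 : ∀ j, e j ^ 2 = -1) (i : Fin n) :
    (∀ f : QIdx n → C, Kosp q i (Eosp q e i (KospInv q i f)) = (q : ℂ) • Eosp q e i f) ∧
    (∀ f : QIdx n → C, Kosp q i (Fosp q e i (KospInv q i f)) = (q : ℂ)⁻¹ • Fosp q e i f) ∧
    (∀ f : QIdx n → C,
      Eosp q e i (Fosp q e i f) + Fosp q e i (Eosp q e i f)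
        = ((q : ℂ) - (q : ℂ)⁻¹)⁻¹ • (Kosp q i f - KospInv q i f)) :=
  osp_relations_general n q hq C e he1 i
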